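/- arXiv:2510.08484 — 9 statements merged into one kernel-verified Lean document; each statement's English description precedes it below -/
import Mathlib

section
/- The classical value of Feige's game G_F equals 1/2. Precisely: (i) for every classical correlation of the form p(a,b|x,y) = Σ_{ω∈Ω} γ(ω)·p_ω(a|x)·q_ω(b|y), where Ω is a finite set, γ : Ω → [0,1] is a probability distribution, and for each ω, x, y the families p_ω(·|x) and q_ω(·|y) are probability distributions on {0,1,⊥}, the winning probability satisfies ω(p) ≤ 1/2; and (ii) there is a deterministic strategy, i.e. functions f, g : {0,1} → {0,1,⊥} with p(a,b|x,y) = 1 if a = f(x) and b = g(y) and 0 otherwise, whose winning probability equals exactly 1/2. -/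
/-!
A classical strategy is a mixture of product strategies and the winning probability is linear in
the mixture, so it suffices to bound product strategies. Let `U` and `V` be the total
probabilities with which Alice and Bob answer `⊥` on their two questions. Alice's `⊥`-answers can
only win against Bob's bit answers, which have total mass `2 - V` and mass at most `2 - V` on each
bit; this caps their contribution at `min 1 U * (2 - V)`, and symmetrically for Bob. With
`s = min 1 U`, `t = min 1 V` the expected number of won question pairs, out of four, is at most
`s (2 - t) + t (2 - s) = 2 - 2 (1 - s) (1 - t) ≤ 2`.
-/

open BigOperators

/-- Winning probability in Feige's game `G_F` of a correlation `p a b x y = p(a,b|x,y)`.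
Questions are bits (`Bool`), answers lie in `Option Bool` where `none` plays the role of `⊥`
and `some c` the role of the bit `c`.  The players win on questions `(x,y)` and answers `(a,b)`
iff `(a,b) = (⊥, x)` or `(a,b) = (y, ⊥)`, and questions are uniformly distributed. -/
noncomputable def feigeWinProb (p : Option Bool → Option Bool → Bool → Bool → ℝ) : ℝ :=
  (1 / 4) * ∑ x : Bool, ∑ y : Bool, (p none (some x) x y + p (some y) none x y)

open Finset

theorem sum_mul_le_min_one_sum_mul {ι : Type*} [Fintype ι] {u b : ι → ℝ} {M : ℝ}
    (hu₀ : ∀ i, 0 ≤ u i) (hu₁ : ∀ i, u i ≤ 1) (hb₀ : ∀ i, 0 ≤ b i) (hbM : ∀ i, b i ≤ M)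
    (hsum : ∑ i, b i ≤ M) :
    ∑ i, u i * b i ≤ min 1 (∑ i, u i) * M := by
  rcases min_cases 1 (∑ i, u i) with ⟨hmin, -⟩ | ⟨hmin, -⟩ <;> rw [hmin]
  · calc ∑ i, u i * b i ≤ ∑ i, b i :=
          sum_le_sum fun i _ => mul_le_of_le_one_left (hb₀ i) (hu₁ i)
      _ ≤ 1 * M := by rwa [one_mul]
  · rw [sum_mul]
    exact sum_le_sum fun i _ => mul_le_mul_of_nonneg_left (hbM i) (hu₀ i)

section Stochastic

variable {ι κ : Type*} [Fintype κ] {q : ι → Option κ → ℝ}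

theorem sum_some_eq_one_sub_none (hq₁ : ∀ i, ∑ a, q i a = 1) (i : ι) :
    ∑ k, q i (some k) = 1 - q i none := by
  rw [← hq₁ i, Fintype.sum_option]
  ring

theorem some_le_one_sub_none (hq₀ : ∀ i a, 0 ≤ q i a) (hq₁ : ∀ i, ∑ a, q i a = 1)
    (i : ι) (k : κ) :
    q i (some k) ≤ 1 - q i none := by
  rw [← sum_some_eq_one_sub_none hq₁]
  exact single_le_sum (fun k _ => hq₀ i (some k)) (mem_univ k)

theorem none_le_one (hq₀ : ∀ i a, 0 ≤ q i a) (hq₁ : ∀ i, ∑ a, q i a = 1) (i : ι) :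
    q i none ≤ 1 := by
  rw [← hq₁ i]
  exact single_le_sum (fun a _ => hq₀ i a) (mem_univ none)

end Stochastic

theorem sum_none_mul_sum_some_le {p q : Bool → Option Bool → ℝ}
    (hp₀ : ∀ x a, 0 ≤ p x a) (hp₁ : ∀ x, ∑ a, p x a = 1)
    (hq₀ : ∀ y b, 0 ≤ q y b) (hq₁ : ∀ y, ∑ b, q y b = 1) :
    ∑ x, p x none * ∑ y, q y (some x) ≤ min 1 (∑ x, p x none) * (2 - ∑ y, q y none) := by
  have hbits : ∑ x, ∑ y, q y (some x) = 2 - ∑ y, q y none := by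
    rw [sum_comm]
    simp only [sum_some_eq_one_sub_none hq₁, sum_sub_distrib, sum_const, card_univ,
      Fintype.card_bool]
    norm_num
  refine sum_mul_le_min_one_sum_mul (fun x => hp₀ x none) (none_le_one hp₀ hp₁)
    (fun x => sum_nonneg fun y _ => hq₀ y (some x)) (fun x => ?_) hbits.le
  calc ∑ y, q y (some x) ≤ ∑ y, (1 - q y none) :=
        sum_le_sum fun y _ => some_le_one_sub_none hq₀ hq₁ y x
    _ = 2 - ∑ y, q y none := by simp [sum_sub_distrib]

theorem min_one_mul_add_min_one_mul_le_two {U V : ℝ} (hU : 0 ≤ U) (hV : 0 ≤ V) :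
    min 1 U * (2 - V) + min 1 V * (2 - U) ≤ 2 := by
  rcases min_cases 1 U with ⟨hs, _⟩ | ⟨hs, _⟩ <;> rcases min_cases 1 V with ⟨ht, _⟩ | ⟨ht, _⟩ <;>
    rw [hs, ht] <;> nlinarith [mul_nonneg hU hV]

theorem feigeWinProb_prod (p q : Bool → Option Bool → ℝ) :
    feigeWinProb (fun a b x y => p x a * q y b) =
      (1 / 4) * (∑ x, p x none * ∑ y, q y (some x) + ∑ y, q y none * ∑ x, p x (some y)) := by
  simp only [feigeWinProb, Fintype.sum_bool]
  ring

theorem feigeWinProb_prod_le {p q : Bool → Option Bool → ℝ}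
    (hp₀ : ∀ x a, 0 ≤ p x a) (hp₁ : ∀ x, ∑ a, p x a = 1)
    (hq₀ : ∀ y b, 0 ≤ q y b) (hq₁ : ∀ y, ∑ b, q y b = 1) :
    feigeWinProb (fun a b x y => p x a * q y b) ≤ 1 / 2 := by
  have hAlice := sum_none_mul_sum_some_le hp₀ hp₁ hq₀ hq₁
  have hBob := sum_none_mul_sum_some_le hq₀ hq₁ hp₀ hp₁
  have hsum := min_one_mul_add_min_one_mul_le_two (U := ∑ x, p x none) (V := ∑ y, q y none)
    (sum_nonneg fun x _ => hp₀ x none) (sum_nonneg fun y _ => hq₀ y none)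
  rw [feigeWinProb_prod]
  linarith

theorem feigeWinProb_sum {Ω : Type*} (s : Finset Ω) (γ : Ω → ℝ)
    (P : Ω → Option Bool → Option Bool → Bool → Bool → ℝ) :
    feigeWinProb (fun a b x y => ∑ ω ∈ s, γ ω * P ω a b x y) =
      ∑ ω ∈ s, γ ω * feigeWinProb (P ω) := by
  simp only [feigeWinProb, Fintype.sum_bool, mul_sum, ← sum_add_distrib]
  exact sum_congr rfl fun ω _ => by ring

/-- The classical value of Feige's game equals `1/2`:
(i) every classical (local hidden-variable) correlation wins with probability at most `1/2`;
(ii) some deterministic strategy wins with probability exactly `1/2`. -/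
theorem feige_classical_value :
    (∀ (Ω : Type) [Fintype Ω] (γ : Ω → ℝ) (pA pB : Ω → Bool → Option Bool → ℝ),
      (∀ ω, 0 ≤ γ ω) → (∑ ω, γ ω = 1) →
      (∀ ω x a, 0 ≤ pA ω x a) → (∀ ω x, ∑ a : Option Bool, pA ω x a = 1) →
      (∀ ω y b, 0 ≤ pB ω y b) → (∀ ω y, ∑ b : Option Bool, pB ω y b = 1) →
      feigeWinProb (fun a b x y => ∑ ω, γ ω * pA ω x a * pB ω y b) ≤ 1 / 2)
    ∧ (∃ f g : Bool → Option Bool,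
      feigeWinProb (fun a b x y => if a = f x ∧ b = g y then 1 else 0) = 1 / 2) := by
  constructor
  · intro Ω _ γ pA pB hγ₀ hγ₁ hA₀ hA₁ hB₀ hB₁
    simp_rw [mul_assoc]
    calc feigeWinProb (fun a b x y => ∑ ω, γ ω * (pA ω x a * pB ω y b))
        = ∑ ω, γ ω * feigeWinProb (fun a b x y => pA ω x a * pB ω y b) := feigeWinProb_sum _ _ _
      _ ≤ ∑ ω, γ ω * (1 / 2) := sum_le_sum fun ω _ => mul_le_mul_of_nonneg_left
          (feigeWinProb_prod_le (hA₀ ω) (hA₁ ω) (hB₀ ω) (hB₁ ω)) (hγ₀ ω)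
      _ = 1 / 2 := by rw [← sum_mul, hγ₁, one_mul]
  · -- Alice always answers `⊥` and Bob always answers `0`: they win exactly when `x = 0`.
    refine ⟨fun _ => none, fun _ => some false, ?_⟩
    simp only [feigeWinProb, Fintype.sum_bool, Option.some.injEq, reduceCtorEq]
    norm_num
end

section
/- There exists a quantum strategy for Feige's game G_F using the 3-dimensional maximally entangled state that wins with probability exactly 9/16. Precisely: there exist projective measurements {P^x_a : a ∈ {0,1,⊥}} and {Q^y_b : b ∈ {0,1,⊥}} for x, y ∈ {0,1}, where each P^x_a and Q^y_b is a 3×3 complex self-adjoint idempotent matrix with Σ_a P^x_a = I₃ and Σ_b Q^y_b = I₃, such that (1/4)·Σ_{x,y∈{0,1}} ⟨ψ₃, (P^x_⊥ ⊗ Q^y_x + P^x_y ⊗ Q^y_⊥) ψ₃⟩ = 9/16, where ψ₃ = (1/√3)(|00⟩ + |11⟩ + |22⟩) ∈ ℂ³ ⊗ ℂ³ and ⊗ denotes the Kronecker product. -/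
/-! Alice and Bob measure in real orthonormal bases of `ℝ³`, i.e. with rank-one projectors
`v vᵀ`. On the maximally entangled state `ψ₃`, a product `A ⊗ B` has expectation
`(∑ i j, A i j * B i j) / 3`, which for two such projectors is `⟨u, v⟩² / 3`. The two bases of
each player are chosen so that all eight pairs of vectors in a winning answer pair have overlap
`±3√6/8`, hence `⟨u, v⟩² = 27/32`, and the winning probability is `(1/4) · 4 · 2 · (27/32) / 3 = 9/16`. -/

open BigOperators Matrix Kronecker

/-- The maximally entangled state `ψ₃ = (1/√3)(|00⟩ + |11⟩ + |22⟩) ∈ ℂ³ ⊗ ℂ³`,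
realizing the tensor product `ℂ³ ⊗ ℂ³` as functions on `Fin 3 × Fin 3`. -/
noncomputable def psi3 : Fin 3 × Fin 3 → ℂ :=
  fun ij => if ij.1 = ij.2 then 1 / (Real.sqrt 3 : ℂ) else 0

noncomputable def rankOneProj {n : Type*} (v : n → ℝ) : Matrix n n ℂ :=
  (vecMulVec v v).map Complex.ofRealHom

section RankOneProj

variable {n : Type*}

@[simp]
lemma rankOneProj_apply (v : n → ℝ) (i j : n) : rankOneProj v i j = ((v i * v j : ℝ) : ℂ) :=
  rfl

lemma isHermitian_rankOneProj (v : n → ℝ) : (rankOneProj v).IsHermitian := by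
  ext i j
  simp [mul_comm]

variable [Fintype n]

lemma rankOneProj_mul_self {v : n → ℝ} (hv : v ⬝ᵥ v = 1) :
    rankOneProj v * rankOneProj v = rankOneProj v := by
  rw [rankOneProj, ← Matrix.map_mul, vecMulVec_mul_vecMulVec, hv, one_smul]

lemma dotProduct_row_self_of_mul_transpose_eq_one {ι : Type*} [DecidableEq ι]
    {V : Matrix ι n ℝ} (hV : V * Vᵀ = 1) (a : ι) : V a ⬝ᵥ V a = 1 := by
  simpa [mul_apply'] using congrFun₂ hV a a

lemma sum_rankOneProj_rows_of_mul_transpose_eq_one {ι : Type*} [Fintype ι] [DecidableEq ι]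
    [DecidableEq n] {V : Matrix ι n ℝ} (hcard : Fintype.card ι = Fintype.card n)
    (hV : V * Vᵀ = 1) : ∑ a, rankOneProj (V a) = 1 :=
  calc ∑ a, rankOneProj (V a) = (Vᵀ * V).map Complex.ofRealHom := by
        ext i j
        simp [Matrix.sum_apply, mul_apply]
    _ = 1 := by
        rw [(mul_eq_one_comm_of_card_eq _ _ _ hcard).mp hV]
        exact Matrix.map_one _ (map_zero _) (map_one _)

lemma sum_rankOneProj_mul_rankOneProj (u v : n → ℝ) :
    ∑ i, ∑ j, rankOneProj u i j * rankOneProj v i j = (((u ⬝ᵥ v) ^ 2 : ℝ) : ℂ) := by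
  simp only [rankOneProj_apply, dotProduct, sq, Finset.sum_mul_sum]
  push_cast
  exact Finset.sum_congr rfl fun i _ => Finset.sum_congr rfl fun j _ => by ring

end RankOneProj

lemma dotProduct_kronecker_mulVec_of_diagonal {R n : Type*} [CommSemiring R] [StarRing R]
    [Fintype n] [DecidableEq n] (c : R) {φ : n × n → R}
    (hφ : ∀ i j, φ (i, j) = if i = j then c else 0) (A B : Matrix n n R) :
    star φ ⬝ᵥ ((A ⊗ₖ B) *ᵥ φ) = star c * c * ∑ i, ∑ j, A i j * B i j := by
  simp only [dotProduct, mulVec, Fintype.sum_prod_type, Pi.star_apply, hφ, kroneckerMap_apply,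
    mul_ite, mul_zero, Finset.sum_ite_eq, Finset.mem_univ, if_true, apply_ite star, star_zero,
    ite_mul, zero_mul, Finset.mul_sum, Finset.sum_ite_irrel, Finset.sum_const_zero]
  exact Finset.sum_congr rfl fun i _ => Finset.sum_congr rfl fun j _ => by ring

lemma dotProduct_kronecker_mulVec_psi3 (A B : Matrix (Fin 3) (Fin 3) ℂ) :
    star psi3 ⬝ᵥ ((A ⊗ₖ B) *ᵥ psi3) = (∑ i, ∑ j, A i j * B i j) / 3 := by
  have hnorm : star (1 / (√3 : ℂ)) * (1 / √3) = 1 / 3 := by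
    have h3 : ((√3 : ℝ) : ℂ) ^ 2 = 3 := by exact_mod_cast Real.sq_sqrt (by norm_num : (0 : ℝ) ≤ 3)
    rw [← Complex.ofReal_one, ← Complex.ofReal_div, Complex.star_def, Complex.conj_ofReal,
      Complex.ofReal_div, Complex.ofReal_one, ← sq, div_pow, h3, one_pow]
  rw [dotProduct_kronecker_mulVec_of_diagonal (1 / (√3 : ℂ)) (fun _ _ => by rfl), hnorm, one_div_mul_eq_div]

noncomputable def alice : Bool → Option Bool → Fin 3 → ℝ
  | false, none => ![1, 0, 0]
  | false, some false => ![0, 1, 0]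
  | false, some true => ![0, 0, 1]
  | true, none => ![-1 / 2, -√6 / 4, -√6 / 4]
  | true, some false => ![√6 / 4, -3 / 4, 1 / 4]
  | true, some true => ![-√6 / 4, -1 / 4, 3 / 4]

noncomputable def bob : Bool → Option Bool → Fin 3 → ℝ
  | false, none => ![-1 / 4, 3 * √6 / 8, -√6 / 8]
  | false, some false => ![-3 * √6 / 8, -1 / 8, 3 / 8]
  | false, some true => ![√6 / 8, 3 / 8, 7 / 8]
  | true, none => ![-1 / 4, -√6 / 8, 3 * √6 / 8]
  | true, some false => ![3 * √6 / 8, -3 / 8, 1 / 8]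
  | true, some true => ![√6 / 8, 7 / 8, 3 / 8]

lemma alice_mul_transpose (x : Bool) : of (alice x) * (of (alice x))ᵀ = 1 := by
  have h6 : √6 ^ 2 = 6 := Real.sq_sqrt (by norm_num)
  ext a b
  cases x <;> rcases a with _ | _ | _ <;> rcases b with _ | _ | _ <;>
    simp [alice, mul_apply', dotProduct, Fin.sum_univ_three] <;> ring_nf <;> norm_num [h6]

lemma bob_mul_transpose (y : Bool) : of (bob y) * (of (bob y))ᵀ = 1 := by
  have h6 : √6 ^ 2 = 6 := Real.sq_sqrt (by norm_num)
  ext a b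
  cases y <;> rcases a with _ | _ | _ <;> rcases b with _ | _ | _ <;>
    simp [bob, mul_apply', dotProduct, Fin.sum_univ_three] <;> ring_nf <;> norm_num [h6]

lemma alice_bob_overlap_sq (x y : Bool) :
    (alice x none ⬝ᵥ bob y (some x)) ^ 2 = 27 / 32 ∧
      (alice x (some y) ⬝ᵥ bob y none) ^ 2 = 27 / 32 := by
  have h6 : √6 ^ 2 = 6 := Real.sq_sqrt (by norm_num)
  cases x <;> cases y <;>
    simp [alice, bob, dotProduct, Fin.sum_univ_three] <;> ring_nf <;> norm_num [h6]

/-- There is a quantum strategy for Feige's game using the 3-dimensional maximally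
entangled state, with projective measurements on `ℂ³`, winning with probability `9/16`.
Questions are `Bool`, answers are `Option Bool` with `none` playing the role of `⊥`. -/
theorem feige_quantum_strategy_nine_sixteenths :
    ∃ P Q : Bool → Option Bool → Matrix (Fin 3) (Fin 3) ℂ,
      (∀ x a, (P x a).IsHermitian) ∧ (∀ x a, P x a * P x a = P x a) ∧
      (∀ x, ∑ a : Option Bool, P x a = 1) ∧
      (∀ y b, (Q y b).IsHermitian) ∧ (∀ y b, Q y b * Q y b = Q y b) ∧
      (∀ y, ∑ b : Option Bool, Q y b = 1) ∧
      (1 / 4 : ℂ) * ∑ x : Bool, ∑ y : Bool,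
        star psi3 ⬝ᵥ ((P x none ⊗ₖ Q y (some x) + P x (some y) ⊗ₖ Q y none).mulVec psi3)
        = 9 / 16 := by
  refine ⟨fun x a => rankOneProj (alice x a), fun y b => rankOneProj (bob y b),
    fun _ _ => isHermitian_rankOneProj _,
    fun x a => rankOneProj_mul_self (dotProduct_row_self_of_mul_transpose_eq_one
      (alice_mul_transpose x) a),
    fun x => sum_rankOneProj_rows_of_mul_transpose_eq_one rfl (alice_mul_transpose x),
    fun _ _ => isHermitian_rankOneProj _,
    fun y b => rankOneProj_mul_self (dotProduct_row_self_of_mul_transpose_eq_one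
      (bob_mul_transpose y) b),
    fun y => sum_rankOneProj_rows_of_mul_transpose_eq_one rfl (bob_mul_transpose y), ?_⟩
  simp only [add_mulVec, dotProduct_add, dotProduct_kronecker_mulVec_psi3,
    sum_rankOneProj_mul_rankOneProj, (alice_bob_overlap_sq _ _).1, (alice_bob_overlap_sq _ _).2,
    Fintype.sum_bool]
  norm_num
end

section
/- The non-signalling value of Feige's game G_F equals 2/3. Precisely, 2/3 is the greatest element of the set of winning probabilities ω(p) = (1/4)·Σ_{x,y∈{0,1}} [p(⊥,x|x,y) + p(y,⊥|x,y)] over all non-signalling correlations p: every non-signalling correlation satisfies ω(p) ≤ 2/3, and there exists a non-signalling correlation with ω(p) = 2/3. -/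
/-!
Write `A(a|x,y)` and `B(b|x,y)` for the two marginals of `p`. In round `(x,y)` the winning
events `(⊥,x)` and `(y,⊥)` are bounded once by `A(⊥) + B(⊥)` and once by `B(x) + A(y)`, so three
times the winning probability is at most `A(⊥) + 2 A(y) + B(⊥) + 2 B(x)`. By non-signalling,
summing `A(⊥|x,y) + 2 A(y|x,y)` over `y` gives `2 (A(⊥|x) + A(0|x) + A(1|x)) = 2`, and likewise for
Bob, so the four rounds win with total probability at most `8/3`. Equality is attained by the
correlation answering `(⊥,x)`, `(y,⊥)` or `(¬y,¬x)`, each with probability `1/3`.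
-/

open BigOperators

/-- `p` is a non-signalling correlation for Feige's game: nonnegative, normalized, and
Alice's (resp. Bob's) marginals are independent of Bob's (resp. Alice's) question. -/
def IsNSCorrelation (p : Option Bool → Option Bool → Bool → Bool → ℝ) : Prop :=
  (∀ a b x y, 0 ≤ p a b x y) ∧
  (∀ x y, ∑ a : Option Bool, ∑ b : Option Bool, p a b x y = 1) ∧
  (∀ b y x x', ∑ a : Option Bool, p a b x y = ∑ a : Option Bool, p a b x' y) ∧
  (∀ a x y y', ∑ b : Option Bool, p a b x y = ∑ b : Option Bool, p a b x y')

open Finset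

section Marginals

variable {α β X Y : Type*}

def marginalLeft [Fintype β] (p : α → β → X → Y → ℝ) (a : α) (x : X) (y : Y) : ℝ :=
  ∑ b, p a b x y

def marginalRight [Fintype α] (p : α → β → X → Y → ℝ) (b : β) (x : X) (y : Y) : ℝ :=
  ∑ a, p a b x y

variable {p : α → β → X → Y → ℝ}

lemma le_marginalLeft [Fintype β] (hp : ∀ a b x y, 0 ≤ p a b x y)
    (a : α) (b : β) (x : X) (y : Y) :
    p a b x y ≤ marginalLeft p a x y :=
  single_le_sum (fun b _ ↦ hp a b x y) (mem_univ b)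

lemma le_marginalRight [Fintype α] (hp : ∀ a b x y, 0 ≤ p a b x y)
    (a : α) (b : β) (x : X) (y : Y) :
    p a b x y ≤ marginalRight p b x y :=
  single_le_sum (fun a _ ↦ hp a b x y) (mem_univ a)

end Marginals

section UpperBound

variable {p : Option Bool → Option Bool → Bool → Bool → ℝ}

lemma three_mul_feige_round_le (hp : ∀ a b x y, 0 ≤ p a b x y) (x y : Bool) :
    3 * (p none (some x) x y + p (some y) none x y) ≤
      (marginalLeft p none x y + 2 * marginalLeft p (some y) x y) +
        (marginalRight p none x y + 2 * marginalRight p (some x) x y) := by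
  linarith [le_marginalLeft hp none (some x) x y, le_marginalLeft hp (some y) none x y,
    le_marginalRight hp none (some x) x y, le_marginalRight hp (some y) none x y]

lemma IsNSCorrelation.sum_marginalLeft (hp : IsNSCorrelation p) (x : Bool) :
    ∑ y, (marginalLeft p none x y + 2 * marginalLeft p (some y) x y) = 2 := by
  obtain ⟨-, hnorm, -, hleft⟩ := hp
  have htotal : ∑ a, marginalLeft p a x false = 1 := hnorm x false
  have hnone : marginalLeft p none x true = marginalLeft p none x false := hleft none x true false
  have hsome : marginalLeft p (some true) x true = marginalLeft p (some true) x false :=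
    hleft (some true) x true false
  rw [Fintype.sum_option, Fintype.sum_bool] at htotal
  rw [Fintype.sum_bool, hnone, hsome]
  linarith

lemma IsNSCorrelation.sum_marginalRight (hp : IsNSCorrelation p) (y : Bool) :
    ∑ x, (marginalRight p none x y + 2 * marginalRight p (some x) x y) = 2 := by
  obtain ⟨-, hnorm, hright, -⟩ := hp
  have htotal : ∑ b, marginalRight p b false y = 1 := by
    rw [← hnorm false y]
    exact sum_comm
  have hnone : marginalRight p none true y = marginalRight p none false y :=
    hright none y true false
  have hsome : marginalRight p (some true) true y = marginalRight p (some true) false y :=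
    hright (some true) y true false
  rw [Fintype.sum_option, Fintype.sum_bool] at htotal
  rw [Fintype.sum_bool, hnone, hsome]
  linarith

theorem IsNSCorrelation.feigeWinProb_le (hp : IsNSCorrelation p) : feigeWinProb p ≤ 2 / 3 :=
  calc feigeWinProb p = (1 / 12) * ∑ x, ∑ y, 3 * (p none (some x) x y + p (some y) none x y) := by
        simp only [feigeWinProb, ← mul_sum]
        ring
    _ ≤ (1 / 12) * ∑ x, ∑ y, ((marginalLeft p none x y + 2 * marginalLeft p (some y) x y) +
          (marginalRight p none x y + 2 * marginalRight p (some x) x y)) := by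
        gcongr with x _ y _
        exact three_mul_feige_round_le hp.1 x y
    _ = (1 / 12) * (∑ x, ∑ y, (marginalLeft p none x y + 2 * marginalLeft p (some y) x y) +
          ∑ y, ∑ x, (marginalRight p none x y + 2 * marginalRight p (some x) x y)) := by
        rw [sum_comm (f := fun y x ↦ marginalRight p none x y + 2 * marginalRight p (some x) x y)]
        simp only [← sum_add_distrib]
    _ = 2 / 3 := by
        simp only [hp.sum_marginalLeft, hp.sum_marginalRight, sum_const, card_univ,
          Fintype.card_bool, nsmul_eq_mul]
        norm_num

end UpperBound

noncomputable def feigeOptimalCorrelation (a b : Option Bool) (x y : Bool) : ℝ :=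
  if (a = none ∧ b = some x) ∨ (a = some y ∧ b = none) ∨ (a = some (!y) ∧ b = some (!x))
  then 1 / 3 else 0

lemma marginalLeft_feigeOptimalCorrelation (a : Option Bool) (x y : Bool) :
    marginalLeft feigeOptimalCorrelation a x y = 1 / 3 := by
  rcases a with _ | _ | _ <;> cases x <;> cases y <;>
    simp [marginalLeft, feigeOptimalCorrelation]

lemma marginalRight_feigeOptimalCorrelation (b : Option Bool) (x y : Bool) :
    marginalRight feigeOptimalCorrelation b x y = 1 / 3 := by
  rcases b with _ | _ | _ <;> cases x <;> cases y <;>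
    simp [marginalRight, feigeOptimalCorrelation]

lemma isNSCorrelation_feigeOptimalCorrelation : IsNSCorrelation feigeOptimalCorrelation := by
  refine ⟨fun a b x y ↦ ?_, fun x y ↦ ?_, fun b y x x' ↦ ?_, fun a x y y' ↦ ?_⟩
  · unfold feigeOptimalCorrelation
    positivity
  · change ∑ a, marginalLeft feigeOptimalCorrelation a x y = 1
    simp only [marginalLeft_feigeOptimalCorrelation, sum_const, card_univ, Fintype.card_option,
      Fintype.card_bool, nsmul_eq_mul]
    norm_num
  · exact (marginalRight_feigeOptimalCorrelation b x y).trans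
      (marginalRight_feigeOptimalCorrelation b x' y).symm
  · exact (marginalLeft_feigeOptimalCorrelation a x y).trans
      (marginalLeft_feigeOptimalCorrelation a x y').symm

lemma feigeWinProb_feigeOptimalCorrelation : feigeWinProb feigeOptimalCorrelation = 2 / 3 := by
  norm_num [feigeWinProb, feigeOptimalCorrelation]

/-- The non-signalling value of Feige's game equals `2/3`: `2/3` is the greatest element of
the set of winning probabilities of non-signalling correlations. -/
theorem feige_ns_value :
    IsGreatest {w : ℝ | ∃ p, IsNSCorrelation p ∧ feigeWinProb p = w} (2 / 3) :=
  ⟨⟨feigeOptimalCorrelation, isNSCorrelation_feigeOptimalCorrelation,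
      feigeWinProb_feigeOptimalCorrelation⟩,
    fun _ ⟨_, hp, hw⟩ ↦ hw ▸ hp.feigeWinProb_le⟩
end

section
/- For every even n = 2m (m ≥ 1), the non-signalling value of the n-fold parallel repetition of Feige's game is at most 1/2^{n/2}: every non-signalling correlation p for G_F^{×n} satisfies (1/4^n)·Σ_{x,y ∈ {0,1}^n} Σ_{I ⊆ {1,…,n}} p(a_I(y), b_I(x) | x, y) ≤ 1/2^m. -/
/-!
Weight the winning event at questions `(x, y)` and subset `I` by `2^{-|I|}`. Bounding `p` by
Alice's marginal, which does not depend on `y`, the weighted winning sum is at most `2^n`: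
an answer `a` is `a_I(y)` for exactly `2^{|I|}` pairs `(y, I)`, namely `I` = the `⊥`-set of `a`
and `y` free on `I`. Symmetrically, bounding `p` by Bob's marginal, the winning sum weighted by
`2^{|I|}` is at most `4^n`. Cauchy–Schwarz then gives `(4^n ω)^2 ≤ 2^n 4^n`, i.e. `ω^2 ≤ 2^{-n}`.
-/

open Finset

namespace FeigeGame

variable {n : ℕ}

def aliceAnswer (I : Finset (Fin n)) (y : Fin n → Bool) : Fin n → Option Bool :=
  fun i => if i ∈ I then none else some (y i)

def bobAnswer (I : Finset (Fin n)) (x : Fin n → Bool) : Fin n → Option Bool :=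
  fun i => if i ∈ I then some (x i) else none

def botSet (a : Fin n → Option Bool) : Finset (Fin n) :=
  {i | a i = none}

lemma card_aliceAnswer_fiber (I : Finset (Fin n)) (a : Fin n → Option Bool) :
    #{y | aliceAnswer I y = a} = if I = botSet a then 2 ^ #I else 0 := by
  have hfiber : ({y | aliceAnswer I y = a} : Finset (Fin n → Bool)) =
      Fintype.piFinset fun i => {b | (if i ∈ I then none else some b) = a i} := by
    ext y
    simp [aliceAnswer, funext_iff]
  rw [hfiber, Fintype.card_piFinset]
  split_ifs with hI
  · subst hI
    rw [← prod_const, ← Fintype.prod_ite_mem (botSet a) fun _ => 2]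
    refine Fintype.prod_congr _ _ fun i => ?_
    rcases h : a i with _ | c <;> simp [botSet, h, filter_eq']
  · -- a coordinate where `I` and the `⊥`-pattern of `a` disagree has an empty factor
    obtain ⟨i, hi⟩ : ∃ i, ¬(i ∈ I ↔ a i = none) := by
      by_contra! h
      exact hI (by ext i; simp [botSet, h i])
    refine prod_eq_zero (mem_univ i) ?_
    rcases h : a i with _ | c <;> by_cases hiI : i ∈ I <;> simp_all

lemma bobAnswer_eq_aliceAnswer_compl (I : Finset (Fin n)) (x : Fin n → Bool) :
    bobAnswer I x = aliceAnswer Iᶜ x := by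
  funext i
  by_cases hi : i ∈ I <;> simp [aliceAnswer, bobAnswer, hi]

lemma sum_sum_aliceAnswer {M : Type*} [AddCommMonoid M]
    (H : Finset (Fin n) → (Fin n → Option Bool) → M) :
    ∑ y, ∑ I, H I (aliceAnswer I y) = ∑ a, 2 ^ #(botSet a) • H (botSet a) a := by
  calc ∑ y, ∑ I, H I (aliceAnswer I y)
      = ∑ I, ∑ a, #{y | aliceAnswer I y = a} • H I a := by
        rw [sum_comm]
        refine sum_congr rfl fun I _ => ?_
        rw [← sum_fiberwise' univ (aliceAnswer I) (H I)]
        simp only [sum_const]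
    _ = ∑ a, 2 ^ #(botSet a) • H (botSet a) a := by
        rw [sum_comm]
        simp only [card_aliceAnswer_fiber, ite_smul, zero_smul, sum_ite_eq', mem_univ, if_true]

lemma sum_sum_bobAnswer {M : Type*} [AddCommMonoid M]
    (H : Finset (Fin n) → (Fin n → Option Bool) → M) :
    ∑ x, ∑ I, H I (bobAnswer I x) = ∑ b, 2 ^ #(botSet b) • H (botSet b)ᶜ b := by
  rw [← sum_sum_aliceAnswer fun I b => H Iᶜ b]
  refine sum_congr rfl fun x _ => ?_
  rw [← Equiv.sum_comp (compl_involutive.toPerm _)]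
  simp only [Function.Involutive.coe_toPerm, bobAnswer_eq_aliceAnswer_compl, compl_compl]

section NonSignalling

variable (p : (Fin n → Option Bool) → (Fin n → Option Bool) → (Fin n → Bool) → (Fin n → Bool) → ℝ)

lemma sum_win_div_two_pow_le (hpos : ∀ a b x y, 0 ≤ p a b x y)
    (hnorm : ∀ x y, ∑ a, ∑ b, p a b x y = 1)
    (hnsB : ∀ a x y y', ∑ b, p a b x y = ∑ b, p a b x y') :
    ∑ x, ∑ y, ∑ I, p (aliceAnswer I y) (bobAnswer I x) x y / 2 ^ #I ≤ 2 ^ n := by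
  calc ∑ x, ∑ y, ∑ I, p (aliceAnswer I y) (bobAnswer I x) x y / 2 ^ #I
      ≤ ∑ x, ∑ y, ∑ I, (∑ b, p (aliceAnswer I y) b x x) / 2 ^ #I := by
        gcongr with x _ y _ I _
        rw [hnsB _ x x y]
        exact single_le_sum (fun b _ => hpos _ b x y) (mem_univ _)
    _ = ∑ x, ∑ a, ∑ b, p a b x x := by
        refine sum_congr rfl fun x _ => ?_
        rw [sum_sum_aliceAnswer fun I a => (∑ b, p a b x x) / 2 ^ #I]
        refine sum_congr rfl fun a _ => ?_
        rw [nsmul_eq_mul]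
        push_cast
        field_simp
    _ = 2 ^ n := by simp [hnorm]

lemma sum_two_pow_mul_win_le (hpos : ∀ a b x y, 0 ≤ p a b x y)
    (hnorm : ∀ x y, ∑ a, ∑ b, p a b x y = 1)
    (hnsA : ∀ b x x' y, ∑ a, p a b x y = ∑ a, p a b x' y) :
    ∑ x, ∑ y, ∑ I, 2 ^ #I * p (aliceAnswer I y) (bobAnswer I x) x y ≤ 4 ^ n := by
  calc ∑ x, ∑ y, ∑ I, 2 ^ #I * p (aliceAnswer I y) (bobAnswer I x) x y
      ≤ ∑ y, ∑ x, ∑ I, 2 ^ #I * ∑ a, p a (bobAnswer I x) y y := by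
        rw [sum_comm]
        gcongr with y _ x _ I _
        rw [hnsA _ y x y]
        exact single_le_sum (fun a _ => hpos a _ x y) (mem_univ _)
    _ = ∑ y, 2 ^ n * ∑ a, ∑ b, p a b y y := by
        refine sum_congr rfl fun y _ => ?_
        rw [sum_sum_bobAnswer fun I b => 2 ^ #I * ∑ a, p a b y y, sum_comm, mul_sum]
        refine sum_congr rfl fun b _ => ?_
        rw [nsmul_eq_mul, ← mul_assoc]
        push_cast
        rw [← pow_add, card_add_card_compl, Fintype.card_fin]
    _ = 4 ^ n := by
        simp [hnorm, ← mul_pow]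
        norm_num

lemma sq_sum_win_le (hpos : ∀ a b x y, 0 ≤ p a b x y)
    (hnorm : ∀ x y, ∑ a, ∑ b, p a b x y = 1)
    (hnsA : ∀ b x x' y, ∑ a, p a b x y = ∑ a, p a b x' y)
    (hnsB : ∀ a x y y', ∑ b, p a b x y = ∑ b, p a b x y') :
    (∑ x, ∑ y, ∑ I, p (aliceAnswer I y) (bobAnswer I x) x y) ^ 2 ≤ 8 ^ n := by
  calc (∑ x, ∑ y, ∑ I, p (aliceAnswer I y) (bobAnswer I x) x y) ^ 2
      ≤ (∑ x, ∑ y, ∑ I, p (aliceAnswer I y) (bobAnswer I x) x y / 2 ^ #I) *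
          ∑ x, ∑ y, ∑ I, 2 ^ #I * p (aliceAnswer I y) (bobAnswer I x) x y := by
        simp only [← Fintype.sum_prod_type']
        refine sum_sq_le_sum_mul_sum_of_sq_le_mul _ (fun _ _ => div_nonneg (hpos ..) (by positivity))
          (fun _ _ => mul_nonneg (by positivity) (hpos ..)) fun _ _ => le_of_eq ?_
        field_simp
    _ ≤ 2 ^ n * 4 ^ n := by
        gcongr
        · exact sum_nonneg fun x _ => sum_nonneg fun y _ => sum_nonneg fun I _ =>
            mul_nonneg (by positivity) (hpos ..)
        · exact sum_win_div_two_pow_le p hpos hnorm hnsB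
        · exact sum_two_pow_mul_win_le p hpos hnorm hnsA
    _ = 8 ^ n := by rw [← mul_pow]; norm_num

noncomputable def winProb : ℝ :=
  (1 / 4 ^ n) * ∑ x, ∑ y, ∑ I, p (aliceAnswer I y) (bobAnswer I x) x y

theorem sq_winProb_le (hpos : ∀ a b x y, 0 ≤ p a b x y)
    (hnorm : ∀ x y, ∑ a, ∑ b, p a b x y = 1)
    (hnsA : ∀ b x x' y, ∑ a, p a b x y = ∑ a, p a b x' y)
    (hnsB : ∀ a x y y', ∑ b, p a b x y = ∑ b, p a b x y') :
    winProb p ^ 2 ≤ 1 / 2 ^ n := by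
  calc winProb p ^ 2 ≤ (1 / 4 ^ n) ^ 2 * 8 ^ n := by
        rw [winProb, mul_pow]
        gcongr
        exact sq_sum_win_le p hpos hnorm hnsA hnsB
    _ = 1 / 2 ^ n := by
        field_simp
        rw [← mul_pow, ← pow_mul, mul_comm n, pow_mul]
        norm_num

end NonSignalling

end FeigeGame

theorem feige_parallel_even_ns_upper_bound_general (m : ℕ)
    (p : (Fin (2 * m) → Option Bool) → (Fin (2 * m) → Option Bool) →
         (Fin (2 * m) → Bool) → (Fin (2 * m) → Bool) → ℝ)
    (hpos : ∀ a b x y, 0 ≤ p a b x y)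
    (hnorm : ∀ x y, ∑ a, ∑ b, p a b x y = 1)
    (hnsA : ∀ b x x' y, ∑ a, p a b x y = ∑ a, p a b x' y)
    (hnsB : ∀ a x y y', ∑ b, p a b x y = ∑ b, p a b x y') :
    (1 / 4 ^ (2 * m) : ℝ) *
      ∑ x : Fin (2 * m) → Bool, ∑ y : Fin (2 * m) → Bool, ∑ I : Finset (Fin (2 * m)),
        p (fun i => if i ∈ I then none else some (y i))
          (fun i => if i ∈ I then some (x i) else none) x y
      ≤ 1 / 2 ^ m := by
  refine le_of_sq_le_sq ?_ (by positivity)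
  -- the left-hand side is `FeigeGame.winProb p` unfolded
  calc _ ≤ 1 / 2 ^ (2 * m) := FeigeGame.sq_winProb_le p hpos hnorm hnsA hnsB
    _ = (1 / 2 ^ m) ^ 2 := by ring

/-- For an even number `n = 2m` of repetitions, the non-signalling value of the `n`-fold
parallel repetition of Feige's game is at most `1/2^{n/2} = 1/2^m`.  Questions are tuples
in `Fin (2m) → Bool`, answers are tuples in `Fin (2m) → Option Bool` (`none` = `⊥`); the
winning answer pairs for questions `(x, y)` are exactly `(a_I(y), b_I(x))` for subsets
`I ⊆ {1, …, n}`, where `(a_I(y))_i = ⊥` for `i ∈ I` and `y_i` otherwise, and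
`(b_I(x))_i = x_i` for `i ∈ I` and `⊥` otherwise. -/
theorem feige_parallel_even_ns_upper_bound (m : ℕ) (hm : 1 ≤ m)
    (p : (Fin (2 * m) → Option Bool) → (Fin (2 * m) → Option Bool) →
         (Fin (2 * m) → Bool) → (Fin (2 * m) → Bool) → ℝ)
    (hpos : ∀ a b x y, 0 ≤ p a b x y)
    (hnorm : ∀ x y, ∑ a, ∑ b, p a b x y = 1)
    (hnsA : ∀ b x x' y, ∑ a, p a b x y = ∑ a, p a b x' y)
    (hnsB : ∀ a x y y', ∑ b, p a b x y = ∑ b, p a b x y') :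
    (1 / 4 ^ (2 * m) : ℝ) *
      ∑ x : Fin (2 * m) → Bool, ∑ y : Fin (2 * m) → Bool, ∑ I : Finset (Fin (2 * m)),
        p (fun i => if i ∈ I then none else some (y i))
          (fun i => if i ∈ I then some (x i) else none) x y
      ≤ 1 / 2 ^ m :=
  feige_parallel_even_ns_upper_bound_general m p hpos hnorm hnsA hnsB
end

section
/- For every m ≥ 1 there is a deterministic strategy for the 2m-fold parallel repetition of Feige's game with winning probability exactly 1/2^m. Concretely, the strategy where on question tuples (x_1,…,x_{2m}) and (y_1,…,y_{2m}) Alice answers a_{2i−1} = ⊥ and a_{2i} = x_{2i−1}, and Bob answers b_{2i−1} = y_{2i} and b_{2i} = ⊥, for 1 ≤ i ≤ m, wins with probability 1/2^m. -/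
/-! Against these strategies the players win exactly when `y_{2i} = x_{2i-1}` for every `i`: at
coordinate `2i-1` Alice abstains and Bob must name `x_{2i-1}`, but he names `y_{2i}`; at coordinate
`2i` Bob abstains and Alice must name `y_{2i}`, but she names `x_{2i-1}`. So for each `x` exactly
`2^m` of the `2^{2m}` questions `y` are won, and the value is `2^{2m} · 2^m / 4^{2m} = 2^{-m}`. -/

open BigOperators

/-- The winning predicate of the `n`-fold parallel repetition of Feige's game: on questions
`x, y : Fin n → Bool` and answers `a, b : Fin n → Option Bool` (`none` = `⊥`), the players
win iff in every coordinate `i`, `(a_i, b_i) = (⊥, x_i)` or `(a_i, b_i) = (y_i, ⊥)`. -/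
def FeigeWinN {n : ℕ} (x y : Fin n → Bool) (a b : Fin n → Option Bool) : Prop :=
  ∀ i, (a i = none ∧ b i = some (x i)) ∨ (a i = some (y i) ∧ b i = none)

instance {n : ℕ} (x y : Fin n → Bool) (a b : Fin n → Option Bool) :
    Decidable (FeigeWinN x y a b) := by
  unfold FeigeWinN; infer_instance

/-- Alice's deterministic strategy for the `2m`-fold repetition (`0`-indexed coordinates,
so coordinate `2i-1` of the paper is even here and `2i` is odd):
`a_{2i-1} = ⊥` and `a_{2i} = x_{2i-1}`. -/
def feigeAliceStrat (m : ℕ) (x : Fin (2 * m) → Bool) (i : Fin (2 * m)) : Option Bool :=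
  if i.val % 2 = 0 then none
  else some (x ⟨i.val - 1, lt_of_le_of_lt (Nat.sub_le _ _) i.isLt⟩)

/-- Bob's deterministic strategy for the `2m`-fold repetition:
`b_{2i-1} = y_{2i}` and `b_{2i} = ⊥`. -/
def feigeBobStrat (m : ℕ) (y : Fin (2 * m) → Bool) (i : Fin (2 * m)) : Option Bool :=
  if i.val % 2 = 0 then some (y ⟨(i.val + 1) % (2 * m), Nat.mod_lt _ i.pos⟩)
  else none

open Finset

theorem Fintype.card_filter_forall_imp_eq {ι β : Type*} [Fintype ι] [DecidableEq ι] [Fintype β]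
    [DecidableEq β] (p : ι → Prop) [DecidablePred p] (c : ι → β) :
    #{y : ι → β | ∀ j, p j → y j = c j} = Fintype.card β ^ #{j | ¬ p j} := by
  calc #{y : ι → β | ∀ j, p j → y j = c j}
      = ∑ y : ι → β, ∏ j, if p j → y j = c j then 1 else 0 := by
        rw [card_filter]
        exact Finset.sum_congr rfl fun y _ => Fintype.prod_boole.symm
    _ = ∏ j, ∑ b : β, if p j → b = c j then 1 else 0 :=
        (Fintype.prod_sum fun j (b : β) => if p j → b = c j then 1 else 0).symm
    _ = ∏ j, if p j then 1 else Fintype.card β := by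
        refine Fintype.prod_congr _ _ fun j => ?_
        by_cases hj : p j <;> simp [hj]
    _ = Fintype.card β ^ #{j | ¬ p j} := by
        rw [prod_ite, prod_const_one, one_mul, prod_const]

theorem Fin.card_filter_val_mod_two_eq_zero (m : ℕ) : #{j : Fin (2 * m) | j.val % 2 = 0} = m := by
  refine (card_nbij' (fun j : Fin (2 * m) => (⟨j / 2, by omega⟩ : Fin m))
    (fun i => (⟨2 * i, by omega⟩ : Fin (2 * m)))
    ?_ ?_ ?_ ?_).trans (card_fin m)
  all_goals
    intro j
    simp only [coe_filter, coe_univ, mem_univ, true_and, Set.mem_ofPred_eq, Set.mem_univ,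
      Fin.ext_iff, implies_true]
  all_goals omega

theorem feigeWinN_strat_iff (m : ℕ) (x y : Fin (2 * m) → Bool) :
    FeigeWinN x y (feigeAliceStrat m x) (feigeBobStrat m y) ↔
      ∀ j : Fin (2 * m), j.val % 2 = 1 → y j = x ⟨j.val - 1, by omega⟩ := by
  constructor
  · intro hwin j hj
    simpa [feigeAliceStrat, feigeBobStrat, hj, eq_comm] using hwin j
  · intro h i
    by_cases hi : i.val % 2 = 0
    · have hsucc := h ⟨i + 1, by omega⟩ (by simp only; omega)
      left
      simp only [feigeAliceStrat, feigeBobStrat, hi, if_true, Option.some.injEq, true_and]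
      convert hsucc using 2 <;> ext
      · exact Nat.mod_eq_of_lt (by omega)
      · exact (Nat.add_sub_cancel _ _).symm
    · right
      simp [feigeAliceStrat, feigeBobStrat, hi, h i (by omega)]

theorem card_filter_feigeWinN_strat (m : ℕ) (x : Fin (2 * m) → Bool) :
    #{y | FeigeWinN x y (feigeAliceStrat m x) (feigeBobStrat m y)} = 2 ^ m := by
  have h := Fintype.card_filter_forall_imp_eq (fun j : Fin (2 * m) => j.val % 2 = 1)
    (fun j => x ⟨j.val - 1, by omega⟩)
  simp_rw [Fintype.card_bool, Nat.mod_two_ne_one, Fin.card_filter_val_mod_two_eq_zero] at h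
  -- `convert`, since `∀ j : Fin _` is decided here by `Nat.decidableForallFin`, not generically
  convert h using 3 with y
  exact feigeWinN_strat_iff m x y

theorem feige_parallel_even_classical_strategy_general (m : ℕ) :
    (1 / 4 ^ (2 * m) : ℝ) *
      ∑ x : Fin (2 * m) → Bool, ∑ y : Fin (2 * m) → Bool,
        (if FeigeWinN x y (feigeAliceStrat m x) (feigeBobStrat m y) then (1 : ℝ) else 0)
      = 1 / 2 ^ m := by
  simp only [sum_boole, card_filter_feigeWinN_strat, sum_const, card_univ, Fintype.card_pi,
    Fintype.card_bool, prod_const, Fintype.card_fin, nsmul_eq_mul]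
  rw [show (4 : ℝ) = 2 ^ 2 by norm_num, ← pow_mul]
  push_cast
  field_simp
  ring

/-- For every `m ≥ 1`, the above deterministic strategy for the `2m`-fold parallel
repetition of Feige's game wins with probability exactly `1/2^m`. -/
theorem feige_parallel_even_classical_strategy (m : ℕ) (hm : 1 ≤ m) :
    (1 / 4 ^ (2 * m) : ℝ) *
      ∑ x : Fin (2 * m) → Bool, ∑ y : Fin (2 * m) → Bool,
        (if FeigeWinN x y (feigeAliceStrat m x) (feigeBobStrat m y) then (1 : ℝ) else 0)
      = 1 / 2 ^ m :=
  feige_parallel_even_classical_strategy_general m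
end

section
/- Let ν = (ν_{ij}) be an n×n matrix with strictly positive real entries and suppose H is an n×n unitary complex matrix with |h_{ij}| = √(ν_{ij}) for all i,j. Assume that for every pair of indices a, b there exists an index l such that Σ_{k ≠ l} √(ν_{ak})·√(ν_{bk}) = √(ν_{al})·√(ν_{bl}). Then every n×n unitary matrix H' with |h'_{ij}| = √(ν_{ij}) for all i,j is equivalent to H: there exist permutation matrices P, P' and diagonal unitary matrices D, D' such that H' = P·D·H·D'·P'. -/
/-!
Write `H' i j = u i j * H i j` with `‖u i j‖ = 1`. For rows `a ≠ b`, orthogonality says that the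
terms `H a k * conj (H b k)` sum to zero, and the hypothesis says that one of them is as long as
all the others together. Equality in the triangle inequality then forces every other term to point
opposite to that one, so such a vanishing sum is determined by its moduli up to one common phase.
Applying this to `H` and `H'` shows that `u a k * conj (u b k)` does not depend on `k`; hence `u`
is a rank-one matrix of phases `D a * D' k` and `H' = diagonal D * H * diagonal D'`.
-/

open BigOperators Matrix

def permMatrixC {n : ℕ} (σ : Equiv.Perm (Fin n)) : Matrix (Fin n) (Fin n) ℂ :=
  Matrix.of fun i j => if σ j = i then 1 else 0

open Finset

theorem permMatrixC_one {n : ℕ} : permMatrixC (1 : Equiv.Perm (Fin n)) = 1 := by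
  ext i j
  simp [permMatrixC, one_apply, eq_comm]

section TriangleEquality

variable {ι F : Type*} [NormedAddCommGroup F] [InnerProductSpace ℝ F]

theorem norm_smul_sum_eq_of_norm_sum_eq {s : Finset ι} {z : ι → F}
    (h : ‖∑ i ∈ s, z i‖ = ∑ i ∈ s, ‖z i‖) {k : ι} (hk : k ∈ s) :
    ‖z k‖ • ∑ i ∈ s, z i = ‖∑ i ∈ s, z i‖ • z k := by
  set S := ∑ i ∈ s, z i
  have hle : ∀ i ∈ s, inner ℝ S (z i) ≤ ‖S‖ * ‖z i‖ := fun i _ => real_inner_le_norm _ _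
  have hsum : ∑ i ∈ s, inner ℝ S (z i) = ∑ i ∈ s, ‖S‖ * ‖z i‖ := by
    rw [← inner_sum, ← mul_sum, ← h, real_inner_self_eq_norm_sq, sq]
  exact inner_eq_norm_mul_iff_real.mp ((sum_eq_sum_iff_of_le hle).mp hsum k hk)

theorem norm_smul_eq_neg_smul_of_sum_eq_zero [Fintype ι] [DecidableEq ι] {z : ι → F}
    (hsum : ∑ i, z i = 0) {l : ι} (hl : ∑ i ∈ univ.erase l, ‖z i‖ = ‖z l‖) {k : ι}
    (hk : k ≠ l) : ‖z l‖ • z k = -(‖z k‖ • z l) := by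
  have hrest : ∑ i ∈ univ.erase l, z i = -z l := by
    rw [sum_erase_eq_sub (mem_univ l), hsum, zero_sub]
  have := norm_smul_sum_eq_of_norm_sum_eq (by rw [hrest, norm_neg, hl])
    (mem_erase.mpr ⟨hk, mem_univ k⟩)
  rwa [hrest, norm_neg, smul_neg, eq_comm] at this

end TriangleEquality

theorem Complex.mul_eq_mul_of_sum_eq_zero_of_norm_eq {ι : Type*} [Fintype ι] [DecidableEq ι]
    {z w : ι → ℂ} (hz : ∑ i, z i = 0) (hw : ∑ i, w i = 0) (hnorm : ∀ i, ‖w i‖ = ‖z i‖)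
    {l : ι} (hl : ∑ i ∈ univ.erase l, ‖z i‖ = ‖z l‖) (k : ι) : w k * z l = z k * w l := by
  rcases eq_or_ne k l with rfl | hk
  · ring
  rcases eq_or_ne (z l) 0 with hzl | hzl
  · rw [hzl, norm_eq_zero.mp ((hnorm l).trans (by rw [hzl, norm_zero])), mul_zero, mul_zero]
  have hzk := norm_smul_eq_neg_smul_of_sum_eq_zero hz hl hk
  have hwk := norm_smul_eq_neg_smul_of_sum_eq_zero hw (by simpa only [hnorm] using hl) hk
  simp only [hnorm, Complex.real_smul] at hzk hwk
  refine mul_left_cancel₀ (Complex.ofReal_ne_zero.mpr (norm_ne_zero_iff.mpr hzl)) ?_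
  linear_combination z l * hwk - w l * hzk

theorem Matrix.sum_mul_star_eq_zero_of_mul_conjTranspose_eq_one {m n α : Type*} [Fintype n]
    [DecidableEq m] [Semiring α] [StarRing α] {M : Matrix m n α} (hM : M * Mᴴ = 1) {a b : m}
    (hab : a ≠ b) : ∑ k, M a k * star (M b k) = 0 := by
  simpa [mul_apply, one_apply_ne hab] using congrFun (congrFun hM a) b

theorem Matrix.mul_star_div_mul_star_eq {ι : Type*} [Fintype ι] [DecidableEq ι]
    {H H' : Matrix ι ι ℂ} (hH : H * Hᴴ = 1) (hH' : H' * H'ᴴ = 1) (hne : ∀ i j, H i j ≠ 0)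
    (hnorm : ∀ i j, ‖H' i j‖ = ‖H i j‖)
    (hcond : ∀ a b, ∃ l, ∑ k ∈ univ.erase l, ‖H a k‖ * ‖H b k‖ = ‖H a l‖ * ‖H b l‖)
    {a b : ι} (hab : a ≠ b) (k k' : ι) :
    H' a k * star (H' b k) / (H a k * star (H b k))
      = H' a k' * star (H' b k') / (H a k' * star (H b k')) := by
  obtain ⟨l, hl⟩ := hcond a b
  have hne' : ∀ k, H a k * star (H b k) ≠ 0 := fun k =>
    mul_ne_zero (hne a k) (star_ne_zero.mpr (hne b k))
  have hcross := Complex.mul_eq_mul_of_sum_eq_zero_of_norm_eq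
    (z := fun k => H a k * star (H b k)) (w := fun k => H' a k * star (H' b k))
    (sum_mul_star_eq_zero_of_mul_conjTranspose_eq_one hH hab)
    (sum_mul_star_eq_zero_of_mul_conjTranspose_eq_one hH' hab)
    (fun k => by simp only [norm_mul, norm_star, hnorm])
    (l := l) (by simpa only [norm_mul, norm_star] using hl)
  have hratio : ∀ k, H' a k * star (H' b k) / (H a k * star (H b k))
      = H' a l * star (H' b l) / (H a l * star (H b l)) := fun k =>
    (div_eq_div_iff (hne' k) (hne' l)).mpr ((hcross k).trans (mul_comm _ _))
  rw [hratio k, hratio k']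

theorem Complex.eq_mul_of_mul_star_eq {ι κ : Type*} {u : ι → κ → ℂ} {r : ι} {c : κ}
    (hr : ∀ k, ‖u r k‖ = 1) (h : ∀ a k, u a k * star (u r k) = u a c * star (u r c))
    (a : ι) (k : κ) : u a k = u a c * star (u r c) * u r k := by
  have hunit : star (u r k) * u r k = 1 := by
    rw [Complex.star_def, mul_comm, Complex.mul_conj', hr, Complex.ofReal_one, one_pow]
  calc u a k = u a k * star (u r k) * u r k := by rw [mul_assoc, hunit, mul_one]
    _ = u a c * star (u r c) * u r k := by rw [h]

theorem Matrix.exists_eq_diagonal_mul_mul_diagonal {ι : Type*} [Fintype ι] [DecidableEq ι]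
    {H H' : Matrix ι ι ℂ} (hH : H * Hᴴ = 1) (hH' : H' * H'ᴴ = 1) (hne : ∀ i j, H i j ≠ 0)
    (hnorm : ∀ i j, ‖H' i j‖ = ‖H i j‖)
    (hcond : ∀ a b, ∃ l, ∑ k ∈ univ.erase l, ‖H a k‖ * ‖H b k‖ = ‖H a l‖ * ‖H b l‖) :
    ∃ D D' : ι → ℂ, (∀ i, ‖D i‖ = 1) ∧ (∀ i, ‖D' i‖ = 1) ∧
      H' = diagonal D * H * diagonal D' := by
  rcases isEmpty_or_nonempty ι with hι | ⟨⟨r⟩⟩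
  · exact ⟨1, 1, isEmptyElim, isEmptyElim, Subsingleton.elim _ _⟩
  set u : ι → ι → ℂ := fun i j => H' i j / H i j with hu
  have hunorm : ∀ i j, ‖u i j‖ = 1 := fun i j => by
    rw [hu, norm_div, hnorm, div_self (norm_ne_zero_iff.mpr (hne i j))]
  have hconst : ∀ a k, u a k * star (u r k) = u a r * star (u r r) := by
    intro a k
    rcases eq_or_ne a r with rfl | har
    · simp only [Complex.star_def, Complex.mul_conj', hunorm]
    · simp only [hu, star_div₀, div_mul_div_comm]
      exact mul_star_div_mul_star_eq hH hH' hne hnorm hcond har k r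
  refine ⟨fun a => u a r * star (u r r), fun k => u r k, fun a => ?_, hunorm r, ?_⟩
  · rw [norm_mul, norm_star, hunorm, hunorm, mul_one]
  · ext a k
    rw [mul_diagonal, diagonal_mul, mul_right_comm,
      ← Complex.eq_mul_of_mul_star_eq (hunorm r) hconst, hu, div_mul_cancel₀ _ (hne a k)]

theorem unitary_with_prescribed_moduli_unique_general (n : ℕ) (ν : Fin n → Fin n → ℝ)
    (hν : ∀ i j, 0 < ν i j)
    (H : Matrix (Fin n) (Fin n) ℂ) (hH₂ : H * Hᴴ = 1)
    (hHmod : ∀ i j, ‖H i j‖ = Real.sqrt (ν i j))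
    (hcond : ∀ a b, ∃ l, ∑ k ∈ Finset.univ.erase l,
        Real.sqrt (ν a k) * Real.sqrt (ν b k) = Real.sqrt (ν a l) * Real.sqrt (ν b l)) :
    ∀ H' : Matrix (Fin n) (Fin n) ℂ, H'ᴴ * H' = 1 → H' * H'ᴴ = 1 →
      (∀ i j, ‖H' i j‖ = Real.sqrt (ν i j)) →
      ∃ (σ σ' : Equiv.Perm (Fin n)) (D D' : Fin n → ℂ),
        (∀ i, ‖D i‖ = 1) ∧ (∀ i, ‖D' i‖ = 1) ∧
        H' = permMatrixC σ * Matrix.diagonal D * H * Matrix.diagonal D' * permMatrixC σ' := by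
  intro H' _ hH'₂ hH'mod
  have hne : ∀ i j, H i j ≠ 0 := fun i j => by
    rw [← norm_ne_zero_iff, hHmod]
    exact (Real.sqrt_pos.mpr (hν i j)).ne'
  obtain ⟨D, D', hD, hD', hH'⟩ := exists_eq_diagonal_mul_mul_diagonal hH₂ hH'₂ hne
    (fun i j => by rw [hHmod, hH'mod]) (by simpa only [hHmod] using hcond)
  exact ⟨1, 1, D, D', hD, hD', by rw [permMatrixC_one, Matrix.one_mul, Matrix.mul_one, hH']⟩

/-- Let `ν` be an `n × n` matrix of strictly positive reals and suppose `H` is a unitary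
matrix with `|H i j| = √(ν i j)`.  If for every pair `a, b` there is an index `l` with
`Σ_{k ≠ l} √(ν a k)·√(ν b k) = √(ν a l)·√(ν b l)`, then every unitary `H'` with
`|H' i j| = √(ν i j)` is equivalent to `H`: there are permutation matrices `P, P'` and
diagonal unitaries `D, D'` with `H' = P · D · H · D' · P'`. -/
theorem unitary_with_prescribed_moduli_unique (n : ℕ) (ν : Fin n → Fin n → ℝ)
    (hν : ∀ i j, 0 < ν i j)
    (H : Matrix (Fin n) (Fin n) ℂ) (hH₁ : Hᴴ * H = 1) (hH₂ : H * Hᴴ = 1)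
    (hHmod : ∀ i j, ‖H i j‖ = Real.sqrt (ν i j))
    (hcond : ∀ a b, ∃ l, ∑ k ∈ Finset.univ.erase l,
        Real.sqrt (ν a k) * Real.sqrt (ν b k) = Real.sqrt (ν a l) * Real.sqrt (ν b l)) :
    ∀ H' : Matrix (Fin n) (Fin n) ℂ, H'ᴴ * H' = 1 → H' * H'ᴴ = 1 →
      (∀ i j, ‖H' i j‖ = Real.sqrt (ν i j)) →
      ∃ (σ σ' : Equiv.Perm (Fin n)) (D D' : Fin n → ℂ),
        (∀ i, ‖D i‖ = 1) ∧ (∀ i, ‖D' i‖ = 1) ∧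
        H' = permMatrixC σ * Matrix.diagonal D * H * Matrix.diagonal D' * permMatrixC σ' :=
  unitary_with_prescribed_moduli_unique_general n ν hν H hH₂ hHmod hcond
end

section
/- Let p be a non-signalling correlation for the n-fold parallel repetition of Feige's game, let I ⊆ {1,…,n}, let y ∈ {0,1}^n be fixed, let J be a set of functions from the complement I^c to {0,1}, and let z ∈ {0,1}^n be arbitrary. Then Σ over all x ∈ {0,1}^n whose restriction to I^c lies in J of p(a_I(y), b_I(x) | x, y) is at most |J| · Σ over all functions u : I → {0,1} of Σ over all a ∈ {0,1,⊥}^n of p(a, b_I(u) | z, y), where b_I(u) ∈ {0,1,⊥}^n is given by (b_I(u))_i = u(i) for i ∈ I and ⊥ for i ∉ I. -/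
/-!
Since Bob's marginal does not depend on Alice's question, each term `p(a_I(y), b_I(x) | x, y)`
is at most `Σ_a p(a, b_I(x) | z, y)`, which depends on `x` only through its restriction to `I`.
Splitting `x` into its restrictions to `I` and to `I^c`, the sum over the `I^c`-part ranges
over `J` and contributes the factor `|J|`.
-/

lemma le_sum_marginal_of_nonneg {A B X Y : Type*} [Fintype A] (p : A → B → X → Y → ℝ)
    (hpos : ∀ a b x y, 0 ≤ p a b x y)
    (hnsA : ∀ b x x' y, ∑ a, p a b x y = ∑ a, p a b x' y) (a : A) (b : B) (x z : X) (y : Y) :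
    p a b x y ≤ ∑ a', p a' b z y :=
  calc p a b x y ≤ ∑ a', p a' b x y :=
        Finset.single_le_sum (fun a' _ => hpos a' b x y) (Finset.mem_univ a)
    _ = ∑ a', p a' b z y := hnsA b x z y

lemma Fintype.sum_ite_restrict_compl_mem {ι β R : Type*} [Fintype ι] [DecidableEq ι]
    [Fintype β] [DecidableEq β] [Semiring R] (s : Finset ι) (J : Finset ({i // i ∉ s} → β))
    (f : (s → β) → R) :
    ∑ x : ι → β, (if (fun i : {i // i ∉ s} => x i) ∈ J then f (fun i : s => x i) else 0)
      = J.card * ∑ u, f u := by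
  set e := Equiv.piEquivPiSubtypeProd (· ∈ s) fun _ => β
  rw [← e.symm.sum_comp, Fintype.sum_prod_type, Finset.mul_sum]
  refine Fintype.sum_congr _ _ fun u => ?_
  have restrict_symm (v) : (fun i : s => e.symm (u, v) i) = u ∧
      (fun i : {i // i ∉ s} => e.symm (u, v) i) = v :=
    Prod.ext_iff.mp (e.apply_symm_apply (u, v))
  simp only [restrict_symm, Finset.sum_ite_mem, Finset.univ_inter, Finset.sum_const, nsmul_eq_mul]

theorem feige_ns_restriction_bound_general (n : ℕ)
    (p : (Fin n → Option Bool) → (Fin n → Option Bool) →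
         (Fin n → Bool) → (Fin n → Bool) → ℝ)
    (hpos : ∀ a b x y, 0 ≤ p a b x y)
    (hnsA : ∀ b x x' y, ∑ a, p a b x y = ∑ a, p a b x' y)
    (I : Finset (Fin n)) (y z : Fin n → Bool)
    (J : Finset (({i : Fin n // i ∉ I}) → Bool)) :
    ∑ x : Fin n → Bool,
      (if (fun i : {i : Fin n // i ∉ I} => x i.1) ∈ J then
        p (fun i => if i ∈ I then none else some (y i))
          (fun i => if i ∈ I then some (x i) else none) x y
      else 0)
    ≤ (J.card : ℝ) *
      ∑ u : ({i : Fin n // i ∈ I}) → Bool, ∑ a : Fin n → Option Bool,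
        p a (fun i => if h : i ∈ I then some (u ⟨i, h⟩) else none) z y := by
  set bobMarginal : ({i : Fin n // i ∈ I} → Bool) → ℝ := fun u =>
    ∑ a : Fin n → Option Bool, p a (fun i => if h : i ∈ I then some (u ⟨i, h⟩) else none) z y
  have answer_eq (x : Fin n → Bool) :
      (fun i => if i ∈ I then some (x i) else none) =
        fun i => if h : i ∈ I then some ((fun j : {i // i ∈ I} => x j) ⟨i, h⟩) else none := by
    simp only [dite_eq_ite]
  refine le_of_le_of_eq (Finset.sum_le_sum fun x _ => ?_)
    (Fintype.sum_ite_restrict_compl_mem I J bobMarginal)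
  split_ifs
  · rw [answer_eq x]
    exact le_sum_marginal_of_nonneg p hpos hnsA _ _ x z y
  · exact le_rfl

/-- Restriction lemma for non-signalling correlations of the `n`-fold parallel repetition of
Feige's game.  Questions are tuples in `Fin n → Bool`, answers in `Fin n → Option Bool`
(`none` = `⊥`).  For `I ⊆ {1, …, n}`, `a_I(y)_i = ⊥` if `i ∈ I` and `y_i` otherwise, and
`b_I(x)_i = x_i` if `i ∈ I` and `⊥` otherwise.  For any set `J` of functions from `I^c` to
`{0,1}` and any `z`, the sum of `p(a_I(y), b_I(x) | x, y)` over all `x` whose restriction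
to `I^c` lies in `J` is at most `|J|` times the sum over functions `u : I → {0,1}` and all
answers `a` of `p(a, b_I(u) | z, y)`. -/
theorem feige_ns_restriction_bound (n : ℕ)
    (p : (Fin n → Option Bool) → (Fin n → Option Bool) →
         (Fin n → Bool) → (Fin n → Bool) → ℝ)
    (hpos : ∀ a b x y, 0 ≤ p a b x y)
    (hnorm : ∀ x y, ∑ a, ∑ b, p a b x y = 1)
    (hnsA : ∀ b x x' y, ∑ a, p a b x y = ∑ a, p a b x' y)
    (hnsB : ∀ a x y y', ∑ b, p a b x y = ∑ b, p a b x y')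
    (I : Finset (Fin n)) (y z : Fin n → Bool)
    (J : Finset (({i : Fin n // i ∉ I}) → Bool)) :
    ∑ x : Fin n → Bool,
      (if (fun i : {i : Fin n // i ∉ I} => x i.1) ∈ J then
        p (fun i => if i ∈ I then none else some (y i))
          (fun i => if i ∈ I then some (x i) else none) x y
      else 0)
    ≤ (J.card : ℝ) *
      ∑ u : ({i : Fin n // i ∈ I}) → Bool, ∑ a : Fin n → Option Bool,
        p a (fun i => if h : i ∈ I then some (u ⟨i, h⟩) else none) z y :=
  feige_ns_restriction_bound_general n p hpos hnsA I y z J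
end

section
/- Let n = 2m with m ≥ 1, let p be a non-signalling correlation for the n-fold parallel repetition of Feige's game, let I ⊆ {1,…,n} have exactly m elements, and let z, z' ∈ {0,1}^n be arbitrary. Then Σ_{x,y ∈ {0,1}^n} p(a_I(y), b_I(x) | x, y) ≤ 2^{m−1} · ( Σ_{y ∈ {0,1}^n} Σ_{a ∈ {0,1,⊥}^n} Σ_{u : I → {0,1}} p(a, b_I(u) | z, y) + Σ_{x ∈ {0,1}^n} Σ_{b ∈ {0,1,⊥}^n} Σ_{v : I^c → {0,1}} p(a_I(v), b | x, z') ), where b_I(u) ∈ {0,1,⊥}^n is given by (b_I(u))_i = u(i) for i ∈ I and ⊥ otherwise, and a_I(v) ∈ {0,1,⊥}^n is given by (a_I(v))_i = ⊥ for i ∈ I and v(i) otherwise. -/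
/-!
Bob's answer `b_I(x)` depends only on `x` restricted to `I`. Dropping Alice's answer and using
non-signalling to move Bob's question to `z` turns each term into a marginal that no longer sees
the `m` coordinates of `x` off `I`, so summing over them only contributes a factor `2^m`: the left
side is at most `2^m` times the first sum. Symmetrically it is at most `2^m` times the second, and
averaging the two bounds gives the factor `2^(m-1)`.
-/

theorem Fintype.sum_comp_restrict {ι β M : Type*} [Fintype ι] [DecidableEq ι] [Fintype β]
    [AddCommMonoid M] (P : ι → Prop) [DecidablePred P] [Fintype {i // P i}]
    [Fintype {i // ¬ P i}] (g : ({i // P i} → β) → M) :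
    ∑ x : ι → β, g (Subtype.restrict P x) = Fintype.card ({i // ¬ P i} → β) • ∑ u, g u := by
  rw [Fintype.sum_equiv (Equiv.piEquivPiSubtypeProd P fun _ => β)
      (fun x => g (Subtype.restrict P x)) (fun q => g q.1) fun _ => rfl, Fintype.sum_prod_type]
  simp only [Finset.sum_const, Finset.card_univ, Finset.smul_sum]

namespace Feige

variable {ι β : Type*} [DecidableEq ι]

/-- `b_I(u)`: the answer `u` on `I` and `⊥` (`none`) off `I`. -/
def bobAnswer (I : Finset ι) (u : {i // i ∈ I} → β) : ι → Option β :=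
  fun i => if h : i ∈ I then some (u ⟨i, h⟩) else none

/-- `a_I(v)`: `⊥` (`none`) on `I` and the answer `v` off `I`. -/
def aliceAnswer (I : Finset ι) (v : {i // i ∉ I} → β) : ι → Option β :=
  fun i => if h : i ∈ I then none else some (v ⟨i, h⟩)

section NonSignalling

variable {A B X Y : Type*} {p : A → B → X → Y → ℝ}

theorem le_sum_fst [Fintype A] (hpos : ∀ a b x y, 0 ≤ p a b x y)
    (hnsA : ∀ b x x' y, ∑ a, p a b x y = ∑ a, p a b x' y) (a : A) (b : B) (x z : X) (y : Y) :
    p a b x y ≤ ∑ a', p a' b z y :=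
  (Finset.single_le_sum (fun a' _ => hpos a' b x y) (Finset.mem_univ a)).trans_eq (hnsA b x z y)

theorem le_sum_snd [Fintype B] (hpos : ∀ a b x y, 0 ≤ p a b x y)
    (hnsB : ∀ a x y y', ∑ b, p a b x y = ∑ b, p a b x y') (a : A) (b : B) (x : X) (y z : Y) :
    p a b x y ≤ ∑ b', p a b' x z :=
  (Finset.single_le_sum (fun b' _ => hpos a b' x y) (Finset.mem_univ b)).trans_eq (hnsB a x y z)

end NonSignalling

variable [Fintype ι] [Fintype β] {p : (ι → Option β) → (ι → Option β) → (ι → β) → (ι → β) → ℝ}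

theorem sum_le_card_pow_mul_sum_bobAnswer (hpos : ∀ a b x y, 0 ≤ p a b x y)
    (hnsA : ∀ b x x' y, ∑ a, p a b x y = ∑ a, p a b x' y) (I : Finset ι)
    (f : (ι → β) → (ι → β) → ι → Option β) (z : ι → β) :
    ∑ x : ι → β, ∑ y, p (f x y) (bobAnswer I (Subtype.restrict (· ∈ I) x)) x y
      ≤ (Fintype.card β : ℝ) ^ Iᶜ.card * ∑ y, ∑ a, ∑ u, p a (bobAnswer I u) z y := by
  calc ∑ x : ι → β, ∑ y, p (f x y) (bobAnswer I (Subtype.restrict (· ∈ I) x)) x y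
      ≤ ∑ x : ι → β, ∑ y, ∑ a, p a (bobAnswer I (Subtype.restrict (· ∈ I) x)) z y :=
        Finset.sum_le_sum fun x _ => Finset.sum_le_sum fun y _ => le_sum_fst hpos hnsA _ _ _ _ _
    _ = Fintype.card ({i // i ∉ I} → β) • ∑ u, ∑ y, ∑ a, p a (bobAnswer I u) z y :=
        Fintype.sum_comp_restrict (· ∈ I) fun u => ∑ y, ∑ a, p a (bobAnswer I u) z y
    _ = (Fintype.card β : ℝ) ^ Iᶜ.card * ∑ y, ∑ a, ∑ u, p a (bobAnswer I u) z y := by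
        rw [nsmul_eq_mul, Fintype.card_fun, Nat.cast_pow, Fintype.card_subtype_compl,
          Finset.card_compl, Fintype.card_coe, Finset.sum_comm]
        simp only [Finset.sum_comm (γ := {i // i ∈ I} → β)]

theorem sum_le_card_pow_mul_sum_aliceAnswer (hpos : ∀ a b x y, 0 ≤ p a b x y)
    (hnsB : ∀ a x y y', ∑ b, p a b x y = ∑ b, p a b x y') (I : Finset ι)
    (f : (ι → β) → (ι → β) → ι → Option β) (z' : ι → β) :
    ∑ x, ∑ y : ι → β, p (aliceAnswer I (Subtype.restrict (· ∉ I) y)) (f x y) x y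
      ≤ (Fintype.card β : ℝ) ^ I.card * ∑ x, ∑ b, ∑ v, p (aliceAnswer I v) b x z' := by
  calc ∑ x, ∑ y : ι → β, p (aliceAnswer I (Subtype.restrict (· ∉ I) y)) (f x y) x y
      ≤ ∑ x, ∑ y : ι → β, ∑ b, p (aliceAnswer I (Subtype.restrict (· ∉ I) y)) b x z' :=
        Finset.sum_le_sum fun x _ => Finset.sum_le_sum fun y _ => le_sum_snd hpos hnsB _ _ _ _ _
    _ = ∑ x, Fintype.card ({i // ¬ i ∉ I} → β) • ∑ v, ∑ b, p (aliceAnswer I v) b x z' :=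
        Finset.sum_congr rfl fun x _ =>
          Fintype.sum_comp_restrict (· ∉ I) fun v => ∑ b, p (aliceAnswer I v) b x z'
    _ = (Fintype.card β : ℝ) ^ I.card * ∑ x, ∑ b, ∑ v, p (aliceAnswer I v) b x z' := by
        simp only [nsmul_eq_mul, Fintype.card_fun, Nat.cast_pow, not_not, Fintype.card_coe,
          ← Finset.mul_sum]
        rw [Finset.sum_congr rfl fun x _ => Finset.sum_comm]

end Feige

theorem feige_ns_half_subset_bound_general (m : ℕ) (hm : 1 ≤ m)
    (p : (Fin (2 * m) → Option Bool) → (Fin (2 * m) → Option Bool) →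
         (Fin (2 * m) → Bool) → (Fin (2 * m) → Bool) → ℝ)
    (hpos : ∀ a b x y, 0 ≤ p a b x y)
    (hnsA : ∀ b x x' y, ∑ a, p a b x y = ∑ a, p a b x' y)
    (hnsB : ∀ a x y y', ∑ b, p a b x y = ∑ b, p a b x y')
    (I : Finset (Fin (2 * m))) (hI : I.card = m)
    (z z' : Fin (2 * m) → Bool) :
    ∑ x : Fin (2 * m) → Bool, ∑ y : Fin (2 * m) → Bool,
      p (fun i => if i ∈ I then none else some (y i))
        (fun i => if i ∈ I then some (x i) else none) x y
    ≤ (2 : ℝ) ^ (m - 1) *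
      ((∑ y : Fin (2 * m) → Bool, ∑ a : Fin (2 * m) → Option Bool,
          ∑ u : ({i : Fin (2 * m) // i ∈ I}) → Bool,
            p a (fun i => if h : i ∈ I then some (u ⟨i, h⟩) else none) z y)
        + (∑ x : Fin (2 * m) → Bool, ∑ b : Fin (2 * m) → Option Bool,
          ∑ v : ({i : Fin (2 * m) // i ∉ I}) → Bool,
            p (fun i => if h : i ∈ I then none else some (v ⟨i, h⟩)) b x z')) := by
  open Feige in
  show ∑ x, ∑ y, p (aliceAnswer I (Subtype.restrict (· ∉ I) y))
      (bobAnswer I (Subtype.restrict (· ∈ I) x)) x y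
    ≤ 2 ^ (m - 1) * (∑ y, ∑ a, ∑ u, p a (bobAnswer I u) z y
      + ∑ x, ∑ b, ∑ v, p (aliceAnswer I v) b x z')
  have hIc : Iᶜ.card = m := by rw [Finset.card_compl, Fintype.card_fin, hI]; omega
  have hBob := Feige.sum_le_card_pow_mul_sum_bobAnswer hpos hnsA I
    (fun _ y => Feige.aliceAnswer I (Subtype.restrict (· ∉ I) y)) z
  have hAlice := Feige.sum_le_card_pow_mul_sum_aliceAnswer hpos hnsB I
    (fun x _ => Feige.bobAnswer I (Subtype.restrict (· ∈ I) x)) z'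
  rw [Fintype.card_bool, hIc] at hBob
  rw [Fintype.card_bool, hI] at hAlice
  have hpow : ((2 : ℕ) : ℝ) ^ m = 2 * 2 ^ (m - 1) := by
    rw [Nat.cast_ofNat, ← pow_succ', Nat.sub_add_cancel hm]
  rw [hpow] at hBob hAlice
  linarith

/-- Key estimate for `m`-element subsets in the `2m`-fold parallel repetition of Feige's
game.  Questions are tuples in `Fin (2m) → Bool`, answers in `Fin (2m) → Option Bool`
(`none` = `⊥`).  For `I ⊆ {1, …, 2m}`, `a_I(y)_i = ⊥` if `i ∈ I` and `y_i` otherwise, and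
`b_I(x)_i = x_i` if `i ∈ I` and `⊥` otherwise; for `u : I → {0,1}` we write `b_I(u)` for
the answer which is `u(i)` on `I` and `⊥` outside, and for `v : I^c → {0,1}` we write
`a_I(v)` for the answer which is `⊥` on `I` and `v(i)` outside.  If `p` is non-signalling
and `|I| = m`, then for all `z, z'`:
`Σ_{x,y} p(a_I(y), b_I(x)|x,y) ≤ 2^{m-1}·(Σ_{y,a,u} p(a, b_I(u)|z,y) + Σ_{x,b,v} p(a_I(v), b|x,z'))`. -/
theorem feige_ns_half_subset_bound (m : ℕ) (hm : 1 ≤ m)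
    (p : (Fin (2 * m) → Option Bool) → (Fin (2 * m) → Option Bool) →
         (Fin (2 * m) → Bool) → (Fin (2 * m) → Bool) → ℝ)
    (hpos : ∀ a b x y, 0 ≤ p a b x y)
    (hnorm : ∀ x y, ∑ a, ∑ b, p a b x y = 1)
    (hnsA : ∀ b x x' y, ∑ a, p a b x y = ∑ a, p a b x' y)
    (hnsB : ∀ a x y y', ∑ b, p a b x y = ∑ b, p a b x y')
    (I : Finset (Fin (2 * m))) (hI : I.card = m)
    (z z' : Fin (2 * m) → Bool) :
    ∑ x : Fin (2 * m) → Bool, ∑ y : Fin (2 * m) → Bool,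
      p (fun i => if i ∈ I then none else some (y i))
        (fun i => if i ∈ I then some (x i) else none) x y
    ≤ (2 : ℝ) ^ (m - 1) *
      ((∑ y : Fin (2 * m) → Bool, ∑ a : Fin (2 * m) → Option Bool,
          ∑ u : ({i : Fin (2 * m) // i ∈ I}) → Bool,
            p a (fun i => if h : i ∈ I then some (u ⟨i, h⟩) else none) z y)
        + (∑ x : Fin (2 * m) → Bool, ∑ b : Fin (2 * m) → Option Bool,
          ∑ v : ({i : Fin (2 * m) // i ∉ I}) → Bool,
            p (fun i => if h : i ∈ I then none else some (v ⟨i, h⟩)) b x z')) :=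
  feige_ns_half_subset_bound_general m hm p hpos hnsA hnsB I hI z z'
end

section
/- Let ν = (ν_{ij}) be an n×n matrix of strictly positive reals and let {P_1, …, P_n} and {Q_1, …, Q_n} be projective measurements on ℂ^d (each P_i and Q_j a self-adjoint idempotent d×d complex matrix, with Σ_i P_i = I and Σ_j Q_j = I) satisfying P_a Q_b P_a = ν_{ab} P_a and Q_b P_a Q_b = ν_{ab} Q_b for all a, b. Then all the projections have the same rank τ, i.e. rank P_a = rank Q_b = τ for all a, b, and d = n·τ; in particular n divides d. -/
open BigOperators Matrix

/-! Rank is invariant under the biased relations: `P_a Q_b P_a = ν_{ab} P_a` with `ν_{ab} ≠ 0`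
exhibits `P_a` as a product through `Q_b`, so `rank P_a ≤ rank Q_b`, and symmetrically. Hence all
the projections share one rank `τ`, and taking traces in `∑ₐ P_a = 1` (the trace of an idempotent
is its rank) gives `d = n τ`. -/

theorem Matrix.rank_le_of_mul_mul_eq_smul {m n K : Type*} [Fintype m] [Fintype n] [Field K]
    {A : Matrix m n K} {B : Matrix n m K} {c : K} (hc : c ≠ 0) (h : A * B * A = c • A) :
    A.rank ≤ B.rank :=
  calc A.rank = (c • A).rank :=
        (rank_smul_of_mem_nonZeroDivisors A (mem_nonZeroDivisors_of_ne_zero hc)).symm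
    _ = (A * B * A).rank := by rw [h]
    _ ≤ (A * B).rank := rank_mul_le_left _ _
    _ ≤ B.rank := rank_mul_le_right _ _

theorem Matrix.trace_eq_rank_of_isIdempotentElem {m K : Type*} [Fintype m] [DecidableEq m]
    [Field K] {A : Matrix m m K} (hA : IsIdempotentElem A) : A.trace = A.rank := by
  have hA' : IsIdempotentElem (toLin' A) := hA.map toLinAlgEquiv'
  rw [← trace_toLin'_eq, LinearMap.IsProj.trace (LinearMap.IsIdempotentElem.isProj_range _ hA'),
    rank, toLin'_apply']

theorem Matrix.sum_rank_eq_card_of_sum_eq_one {ι m K : Type*} [Fintype ι] [Fintype m]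
    [DecidableEq m] [Field K] [CharZero K] {P : ι → Matrix m m K}
    (hP : ∀ a, IsIdempotentElem (P a)) (hsum : ∑ a, P a = 1) :
    ∑ a, (P a).rank = Fintype.card m := by
  have htrace := congrArg trace hsum
  rw [trace_sum, trace_one] at htrace
  simp only [fun a => trace_eq_rank_of_isIdempotentElem (hP a)] at htrace
  exact_mod_cast htrace

theorem exists_forall_eq_of_forall_eq {ι α : Type*} [Inhabited α] {f g : ι → α}
    (h : ∀ a b, f a = g b) : ∃ τ, (∀ a, f a = τ) ∧ ∀ b, g b = τ := by
  rcases isEmpty_or_nonempty ι with hι | ⟨⟨a₀⟩⟩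
  · exact ⟨default, hι.elim, hι.elim⟩
  · exact ⟨f a₀, fun a => (h a a₀).trans (h a₀ a₀).symm, fun b => (h a₀ b).symm⟩

theorem nu_biased_measurement_ranks_general (n d : ℕ) (ν : Fin n → Fin n → ℝ)
    (hν : ∀ i j, 0 < ν i j)
    (P Q : Fin n → Matrix (Fin d) (Fin d) ℂ)
    (hPi : ∀ a, P a * P a = P a)
    (hPs : ∑ a, P a = 1)
    (hPQ : ∀ a b, P a * Q b * P a = (ν a b : ℂ) • P a)
    (hQP : ∀ a b, Q b * P a * Q b = (ν a b : ℂ) • Q b) :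
    ∃ τ : ℕ, (∀ a, (P a).rank = τ) ∧ (∀ b, (Q b).rank = τ) ∧ d = n * τ ∧ n ∣ d := by
  have hrank : ∀ a b, (P a).rank = (Q b).rank := fun a b =>
    have hν' : (ν a b : ℂ) ≠ 0 := Complex.ofReal_ne_zero.mpr (hν a b).ne'
    le_antisymm (rank_le_of_mul_mul_eq_smul hν' (hPQ a b))
      (rank_le_of_mul_mul_eq_smul hν' (hQP a b))
  obtain ⟨τ, hP, hQ⟩ := exists_forall_eq_of_forall_eq hrank
  have hd : d = n * τ := by
    simpa [hP] using (sum_rank_eq_card_of_sum_eq_one hPi hPs).symm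
  exact ⟨τ, hP, hQ, hd, hd ▸ dvd_mul_right n τ⟩

/-- Let `ν` be an `n × n` matrix of strictly positive reals and let `{P_1, …, P_n}` and
`{Q_1, …, Q_n}` be projective measurements on `ℂ^d` satisfying the `ν`-biased relations
`P_a Q_b P_a = ν_{ab} P_a` and `Q_b P_a Q_b = ν_{ab} Q_b`.  Then all projections have the
same rank `τ`, and `d = n·τ`; in particular `n` divides `d`. -/
theorem nu_biased_measurement_ranks (n d : ℕ) (ν : Fin n → Fin n → ℝ)
    (hν : ∀ i j, 0 < ν i j)
    (P Q : Fin n → Matrix (Fin d) (Fin d) ℂ)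
    (hPh : ∀ a, (P a).IsHermitian) (hPi : ∀ a, P a * P a = P a)
    (hPs : ∑ a, P a = 1)
    (hQh : ∀ b, (Q b).IsHermitian) (hQi : ∀ b, Q b * Q b = Q b)
    (hQs : ∑ b, Q b = 1)
    (hPQ : ∀ a b, P a * Q b * P a = (ν a b : ℂ) • P a)
    (hQP : ∀ a b, Q b * P a * Q b = (ν a b : ℂ) • Q b) :
    ∃ τ : ℕ, (∀ a, (P a).rank = τ) ∧ (∀ b, (Q b).rank = τ) ∧ d = n * τ ∧ n ∣ d :=
  nu_biased_measurement_ranks_general n d ν hν P Q hPi hPs hPQ hQP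
end
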